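/- Classification theorem, side-hyperbola case (part 4): Let W = (x_W, y_W) ∈ ℝ² satisfy f₁(W) · f₂(W) > 0 (W lies in the pair of opposite regions R₂ ∪ R₄ cut out by the two perpendicular bisectors, the pair not containing A) and h(W) ≠ 0 (W is not on the line ZV). Let Q_W(x,y) = h(W)² · f₁(x,y) f₂(x,y) − f₁(W) f₂(W) · h(x,y)², the member of the pencil 𝔽 passing through W. Then the discriminant of Q_W is strictly positive; i.e. the pencil member through W is a hyperbola. -/
import Mathlib


/-- Affine linear form vanishing exactly on the perpendicular bisector of `AB`
(`B = (0,0)`, `A = (x_A, y_A)`, `c = |AB|`). -/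
noncomputable def f1 (xA yA c x y : ℝ) : ℝ := 2*xA*x + 2*yA*y - c^2

/-- Affine linear form vanishing exactly on the perpendicular bisector of `AC`
(`C = (1,0)`). -/
noncomputable def f2 (xA yA c x y : ℝ) : ℝ := 2*(1 - xA)*x - 2*yA*y + c^2 - 1

/-- Affine linear form vanishing exactly on the line `ZV`. -/
noncomputable def hZV (yA b c x y : ℝ) : ℝ := (b^2 - c^2)*x - 2*yA*y + c^2

/-- Classification theorem, side-hyperbola case: if `f₁(W) f₂(W) > 0` (so `W` lies in
`R₂ ∪ R₄`) and `W` is not on the line `ZV`, then the member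
`Q_W = h(W)² f₁ f₂ − f₁(W) f₂(W) h²` of the pencil `𝔽` through `W` has strictly
positive discriminant, i.e. is a hyperbola. -/
theorem statement8 (xA yA : ℝ) (hyA : yA ≠ 0)
    (b c : ℝ) (hb : b = Real.sqrt ((xA - 1)^2 + yA^2))
    (hc : c = Real.sqrt (xA^2 + yA^2)) (hbc : b ≠ c)
    (xW yW : ℝ)
    (hWreg : f1 xA yA c xW yW * f2 xA yA c xW yW > 0)
    (hWZV : hZV yA b c xW yW ≠ 0)
    (Q : ℝ → ℝ → ℝ)
    (hQ : ∀ x y : ℝ, Q x y = (hZV yA b c xW yW)^2 * (f1 xA yA c x y * f2 xA yA c x y)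
        - (f1 xA yA c xW yW * f2 xA yA c xW yW) * (hZV yA b c x y)^2)
    (A2 B2 C2 D2 E2 F2 : ℝ)
    (hcoef : ∀ x y : ℝ, Q x y = A2*x^2 + B2*(x*y) + C2*y^2 + D2*x + E2*y + F2) :
    B2^2 - 4*A2*C2 > 0 := by
  have hb2 : b^2 = (xA - 1)^2 + yA^2 := by
    rw [hb, Real.sq_sqrt (by positivity)]
  have hc2 : c^2 = xA^2 + yA^2 := by
    rw [hc, Real.sq_sqrt (by positivity)]
  set t := hZV yA b c xW yW with ht
  set s := f1 xA yA c xW yW * f2 xA yA c xW yW with hs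
  have e1 := (hcoef 1 0).symm.trans (hQ 1 0)
  have e2 := (hcoef (-1) 0).symm.trans (hQ (-1) 0)
  have e3 := (hcoef 0 0).symm.trans (hQ 0 0)
  have e4 := (hcoef 0 1).symm.trans (hQ 0 1)
  have e5 := (hcoef 0 (-1)).symm.trans (hQ 0 (-1))
  have e6 := (hcoef 1 1).symm.trans (hQ 1 1)
  simp only [f1, f2, hZV] at e1 e2 e3 e4 e5 e6
  rw [hb2, hc2] at e1 e2 e3 e4 e5 e6
  have hA : A2 = 4*xA*(1-xA)*t^2 - (1-2*xA)^2*s := by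
    linear_combination (1/2 : ℝ)*e1 + (1/2 : ℝ)*e2 - e3
  have hB : B2 = 4*yA*(1-2*xA)*(t^2 + s) := by
    linear_combination e6 - e1 - e4 + e3
  have hC : C2 = -4*yA^2*(t^2 + s) := by
    linear_combination (1/2 : ℝ)*e4 + (1/2 : ℝ)*e5 - e3
  have key : B2^2 - 4*A2*C2 = 16*yA^2*t^2*(t^2 + s) := by
    rw [hA, hB, hC]; ring
  have h1 : 0 < yA^2 := lt_of_le_of_ne (sq_nonneg yA) (Ne.symm (pow_ne_zero 2 hyA))
  have h2 : 0 < t^2 := lt_of_le_of_ne (sq_nonneg t) (Ne.symm (pow_ne_zero 2 hWZV))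
  have h3 : 0 < t^2 + s := by linarith
  rw [key]
  exact mul_pos (mul_pos (by linarith : (0:ℝ) < 16*yA^2) h2) h3
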